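/- Let n ≥ 1, and for each i ∈ {1, …, n} let S_i and A_i be nonempty finite sets; write S = ∏_i S_i and A = ∏_i A_i. Let w : S × A → ℝ satisfy w(s, a) ≥ 0 for all (s, a). Suppose that for each i, π*_i is a local policy for agent i that maximizes Φ_i(π_i) = ∑_{(s,a) ∈ S × A} w(s, a) · log π_i(s_i)(a_i) over all local policies π_i for agent i. Then the factorized joint policy π*(a | s) = ∏_{i=1}^n π*_i(s_i)(a_i) maximizes Φ(π) = ∑_{(s,a) ∈ S × A} w(s, a) · log π(a | s) over all joint policies of the factorized form π(a | s) = ∏_{i=1}^n π_i(s_i)(a_i) with each π_i a local policy for agent i. -/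

import Mathlib

/-- A local policy for an agent with local state space `Si` and local action
space `Ai`: for every local state, a strictly positive probability
distribution over local actions. -/
def IsLocalPolicy {Si Ai : Type*} [Fintype Ai] (π : Si → Ai → ℝ) : Prop :=
  ∀ s : Si, (∀ a : Ai, 0 < π s a) ∧ ∑ a : Ai, π s a = 1

/-- Global–local consistency of weighted behavior cloning:
if each local policy `π*_i` maximizes the local weighted BC objective
`Φ_i(π_i) = ∑_{(s,a)} w(s,a) · log π_i(s_i)(a_i)`, then the factorized joint
policy `∏_i π*_i(s_i)(a_i)` maximizes the global weighted BC objective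
`Φ(π) = ∑_{(s,a)} w(s,a) · log π(a|s)` over all factorized joint policies. -/
theorem stmt_6 (n : ℕ) (hn : 1 ≤ n)
    (S A : Fin n → Type*)
    [∀ i, Fintype (S i)] [∀ i, Nonempty (S i)]
    [∀ i, Fintype (A i)] [∀ i, Nonempty (A i)]
    (w : (∀ i, S i) → (∀ i, A i) → ℝ) (hw : ∀ s a, 0 ≤ w s a)
    (πstar : ∀ i, S i → A i → ℝ)
    (hstar : ∀ i, IsLocalPolicy (πstar i))
    (hopt : ∀ i, ∀ π : S i → A i → ℝ, IsLocalPolicy π →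
      ∑ s : ∀ i, S i, ∑ a : ∀ i, A i, w s a * Real.log (π (s i) (a i)) ≤
        ∑ s : ∀ i, S i, ∑ a : ∀ i, A i, w s a * Real.log (πstar i (s i) (a i))) :
    ∀ π : ∀ i, S i → A i → ℝ, (∀ i, IsLocalPolicy (π i)) →
      ∑ s : ∀ i, S i, ∑ a : ∀ i, A i, w s a * Real.log (∏ i, π i (s i) (a i)) ≤
        ∑ s : ∀ i, S i, ∑ a : ∀ i, A i, w s a * Real.log (∏ i, πstar i (s i) (a i)) := by
  intro π hπ
  have key : ∀ (ρ : ∀ i, S i → A i → ℝ), (∀ i, IsLocalPolicy (ρ i)) →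
      ∑ s : ∀ i, S i, ∑ a : ∀ i, A i, w s a * Real.log (∏ i, ρ i (s i) (a i)) =
      ∑ i : Fin n, ∑ s : ∀ i, S i, ∑ a : ∀ i, A i,
        w s a * Real.log (ρ i (s i) (a i)) := by
    intro ρ hρ
    have h1 : ∀ (s : ∀ i, S i) (a : ∀ i, A i),
        w s a * Real.log (∏ i, ρ i (s i) (a i)) =
        ∑ i : Fin n, w s a * Real.log (ρ i (s i) (a i)) := by
      intro s a
      rw [Real.log_prod (fun i _ => ((hρ i (s i)).1 (a i)).ne'), Finset.mul_sum]
    simp_rw [h1]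
    calc ∑ s : ∀ i, S i, ∑ a : ∀ i, A i, ∑ i : Fin n, w s a * Real.log (ρ i (s i) (a i))
        = ∑ s : ∀ i, S i, ∑ i : Fin n, ∑ a : ∀ i, A i, w s a * Real.log (ρ i (s i) (a i)) :=
          Finset.sum_congr rfl fun s _ => Finset.sum_comm
      _ = ∑ i : Fin n, ∑ s : ∀ i, S i, ∑ a : ∀ i, A i, w s a * Real.log (ρ i (s i) (a i)) :=
          Finset.sum_comm
  rw [key π hπ, key πstar hstar]
  exact Finset.sum_le_sum fun i _ => hopt i (π i) (hπ i)
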